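/- Let f : ℝⁿ → ℝⁿ be continuous and consider ẋ = f(x). Suppose: (i) Mₑ ⊆ ℝⁿ is closed and forward invariant; (ii) Mᵢ ⊆ Mₑ is closed, stable relative to Mₑ, and globally attractive relative to Mₑ; (iii) M∘ ⊆ Mᵢ is compact, stable relative to Mᵢ, and globally attractive relative to Mᵢ; (iv) solutions are uniformly globally bounded relative to Mₑ: for every compact K ⊆ Mₑ there exists Δ > 0 such that every solution φ with φ(0) ∈ K satisfies ‖φ(t)‖ < Δ for all t in its domain. Then M∘ is uniformly globally asymptotically stable relative to Mₑ: M∘ is stable relative to Mₑ, and for every compact K ⊆ Mₑ and every ε > 0 there exists T > 0 such that every complete solution φ with φ(0) ∈ K satisfies dist(φ(t), M∘) ≤ ε for all t ≥ T. -/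

import Mathlib

open Metric Filter Topology

/-- `φ : ℝ → ℝⁿ` restricted to `[0, T)` (with `0 < T ≤ ∞`) is a solution of `ẋ = f x`. -/
def IsSolution {d : ℕ} (f : EuclideanSpace ℝ (Fin d) → EuclideanSpace ℝ (Fin d))
    (T : EReal) (φ : ℝ → EuclideanSpace ℝ (Fin d)) : Prop :=
  0 < T ∧ ∀ t : ℝ, 0 ≤ t → (t : EReal) < T →
    HasDerivWithinAt φ (f (φ t)) {s : ℝ | 0 ≤ s ∧ (s : EReal) < T} t

/-- `Y` is forward invariant for `ẋ = f x`. -/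
def FwdInvariant {d : ℕ} (f : EuclideanSpace ℝ (Fin d) → EuclideanSpace ℝ (Fin d))
    (Y : Set (EuclideanSpace ℝ (Fin d))) : Prop :=
  ∀ (T : EReal) (φ : ℝ → EuclideanSpace ℝ (Fin d)), IsSolution f T φ → φ 0 ∈ Y →
    ∀ t : ℝ, 0 ≤ t → (t : EReal) < T → φ t ∈ Y

/-- `X` is stable relative to `Y` for `ẋ = f x`. -/
def StableRelCT {d : ℕ} (f : EuclideanSpace ℝ (Fin d) → EuclideanSpace ℝ (Fin d))
    (Y X : Set (EuclideanSpace ℝ (Fin d))) : Prop :=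
  ∀ ε > (0 : ℝ), ∀ Δ > (0 : ℝ), ∃ δ > (0 : ℝ),
    ∀ (T : EReal) (φ : ℝ → EuclideanSpace ℝ (Fin d)), IsSolution f T φ → φ 0 ∈ Y →
      infDist (φ 0) X < δ → ‖φ 0‖ < Δ →
        ∀ t : ℝ, 0 ≤ t → (t : EReal) < T → infDist (φ t) X < ε

/-- `X` is globally attractive relative to `Y` for `ẋ = f x`. -/
def GloballyAttractiveRelCT {d : ℕ}
    (f : EuclideanSpace ℝ (Fin d) → EuclideanSpace ℝ (Fin d))
    (Y X : Set (EuclideanSpace ℝ (Fin d))) : Prop :=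
  ∀ φ : ℝ → EuclideanSpace ℝ (Fin d), IsSolution f ⊤ φ → φ 0 ∈ Y →
    Tendsto (fun t : ℝ => infDist (φ t) X) atTop (𝓝 0)

/-! Solutions that stay in a ball are uniformly Lipschitz, and the estimate
`‖φ t - φ s - (t - s) • f (φ s)‖ ≤ η * |t - s|` for `|t - s|` small holds uniformly, so a
pointwise limit of such solutions along an ultrafilter is again a solution. This compactness
makes the qualitative hypotheses uniform, each time by contradiction:
* on a bounded time window, solutions that start close to `Mi` and close to `Mo` stay `ε`-close
  to `Mo`, since a limit of counterexamples would start in `Mi` and violate the stability of `Mo`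
  relative to `Mi`;
* solutions from a compact subset of `Me` enter the `δ`-neighbourhood of `Mo` within a uniform
  time, since otherwise a limit solution would approach `Mi` while staying `δ` away from `Mo`,
  and a limit of its time shifts would start in `Mi` and contradict the attractivity of `Mo`.
Stability relative to `Me` follows by cutting a trajectory at its last visit to the
`δ`-neighbourhood of `Mo`: the hitting time rules out a long excursion after it, finite-time
robustness a short one. Uniform attractivity then follows from the hitting time and stability. -/

open Set

theorem Continuous.exists_pos_norm_le_of_norm_le {E F : Type*} [NormedAddCommGroup E]
    [ProperSpace E] [SeminormedAddCommGroup F] {f : E → F} (hf : Continuous f) (R : ℝ) :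
    ∃ C > 0, ∀ x, ‖x‖ ≤ R → ‖f x‖ ≤ C := by
  obtain ⟨C, hC, hfC⟩ := ((isCompact_closedBall (0 : E) R).image_of_continuousOn
    hf.continuousOn).isBounded.exists_pos_norm_le
  exact ⟨C, hC, fun x hx => hfC _ (mem_image_of_mem f (mem_closedBall_zero_iff.2 hx))⟩

theorem Ultrafilter.exists_tendsto_of_eventually_mem {ι X : Type*} [TopologicalSpace X]
    (U : Ultrafilter ι) {s : Set X} (hs : IsCompact s) {x : ι → X} (h : ∀ᶠ k in U, x k ∈ s) :
    ∃ a ∈ s, Tendsto x U (𝓝 a) :=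
  hs.ultrafilter_le_nhds (U.map x) (by rwa [Ultrafilter.coe_map, le_principal_iff])

theorem Ultrafilter.exists_forall_tendsto_of_norm_le {ι α E : Type*} [NormedAddCommGroup E]
    [ProperSpace E] (U : Ultrafilter ι) {g : ι → α → E} {S : Set α} {R : ℝ}
    (h : ∀ a ∈ S, ∀ᶠ k in U, ‖g k a‖ ≤ R) :
    ∃ ψ : α → E, ∀ a ∈ S, Tendsto (fun k => g k a) U (𝓝 (ψ a)) := by
  have : ∀ a, ∃ x : E, a ∈ S → Tendsto (fun k => g k a) U (𝓝 x) := fun a => by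
    by_cases ha : a ∈ S
    · obtain ⟨x, -, hx⟩ := U.exists_tendsto_of_eventually_mem (isCompact_closedBall 0 R)
        ((h a ha).mono fun k hk => mem_closedBall_zero_iff.2 hk)
      exact ⟨x, fun _ => hx⟩
    · exact ⟨0, fun h => (ha h).elim⟩
  choose ψ hψ using this
  exact ⟨ψ, hψ⟩

theorem mem_of_tendsto_infDist {ι X : Type*} [PseudoMetricSpace X] {A : Set X}
    (hA : IsClosed A) (hne : A.Nonempty) {F : Filter ι} [F.NeBot] {x : ι → X} {a : X}
    (hx : Tendsto x F (𝓝 a)) (hd : Tendsto (fun k => infDist (x k) A) F (𝓝 0)) : a ∈ A := by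
  rw [hA.mem_iff_infDist_zero hne]
  exact tendsto_nhds_unique (((continuous_infDist_pt A).tendsto a).comp hx) hd

theorem nonempty_of_infDist_pos {X : Type*} [PseudoMetricSpace X] {x : X} {A : Set X}
    (h : 0 < infDist x A) : A.Nonempty :=
  nonempty_iff_ne_empty.2 fun hA => h.ne' (by rw [hA, infDist_empty])

theorem ContinuousOn.exists_last_le {h : ℝ → ℝ} {a b c : ℝ} (hab : a ≤ b)
    (hh : ContinuousOn h (Icc a b)) (ha : h a ≤ c) :
    ∃ s ∈ Icc a b, h s ≤ c ∧ ∀ u ∈ Ioc s b, c < h u := by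
  have hS : IsCompact (Icc a b ∩ h ⁻¹' Iic c) :=
    isCompact_Icc.of_isClosed_subset
      (hh.preimage_isClosed_of_isClosed isClosed_Icc isClosed_Iic) inter_subset_left
  obtain ⟨s, ⟨hs, hsc⟩, hmax⟩ := hS.exists_isGreatest ⟨a, ⟨left_mem_Icc.2 hab, ha⟩⟩
  refine ⟨s, hs, hsc, fun u hu => lt_of_not_ge fun huc => ?_⟩
  exact hu.1.not_ge (hmax ⟨⟨hs.1.trans hu.1.le, hu.2⟩, huc⟩)

section General

variable {ι E : Type*} [NormedAddCommGroup E] [NormedSpace ℝ E]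
  {f : E → E} {I : Set ℝ} {φ ψ : ℝ → E} {C R : ℝ}

def IsSolutionOn (f : E → E) (I : Set ℝ) (φ : ℝ → E) : Prop :=
  ∀ t ∈ I, HasDerivWithinAt φ (f (φ t)) I t

theorem IsSolutionOn.mono {J : Set ℝ} (h : IsSolutionOn f I φ) (hJ : J ⊆ I) :
    IsSolutionOn f J φ :=
  fun t ht => (h t (hJ ht)).mono hJ

theorem IsSolutionOn.norm_sub_le (h : IsSolutionOn f I φ) (hI : Convex ℝ I)
    (hC : ∀ u ∈ I, ‖f (φ u)‖ ≤ C) {s t : ℝ} (hs : s ∈ I) (ht : t ∈ I) :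
    ‖φ t - φ s‖ ≤ C * |t - s| :=
  hI.norm_image_sub_le_of_norm_hasDerivWithin_le h hC hs ht

theorem IsSolutionOn.norm_sub_sub_smul_le (h : IsSolutionOn f I φ) (hI : Convex ℝ I)
    (hC : ∀ u ∈ I, ‖f (φ u)‖ ≤ C) {ρ η : ℝ}
    (hη : ∀ u ∈ I, ∀ v ∈ I, ‖φ u - φ v‖ ≤ C * ρ → ‖f (φ u) - f (φ v)‖ ≤ η)
    {s t : ℝ} (hs : s ∈ I) (ht : t ∈ I) (hst : |t - s| ≤ ρ) :
    ‖φ t - φ s - (t - s) • f (φ s)‖ ≤ η * |t - s| := by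
  have hJ : Convex ℝ (I ∩ uIcc s t) := hI.inter (convex_uIcc s t)
  have hderiv : ∀ u ∈ I ∩ uIcc s t, HasDerivWithinAt (fun u => φ u - u • f (φ s))
      (f (φ u) - f (φ s)) (I ∩ uIcc s t) u := fun u hu => by
    have := ((h u hu.1).mono (inter_subset_left (t := uIcc s t))).sub
      ((hasDerivAt_id u).smul_const (f (φ s))).hasDerivWithinAt
    rwa [one_smul] at this
  have hbound : ∀ u ∈ I ∩ uIcc s t, ‖f (φ u) - f (φ s)‖ ≤ η := fun u hu =>
    hη u hu.1 s hs <| calc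
      ‖φ u - φ s‖ ≤ C * |u - s| := h.norm_sub_le hI hC hs hu.1
      _ ≤ C * ρ := mul_le_mul_of_nonneg_left ((abs_sub_left_of_mem_uIcc hu.2).trans hst)
        ((norm_nonneg _).trans (hC s hs))
  have := hJ.norm_image_sub_le_of_norm_hasDerivWithin_le hderiv hbound
    ⟨hs, left_mem_uIcc⟩ ⟨ht, right_mem_uIcc⟩
  rwa [sub_sub_sub_comm, ← sub_smul] at this

theorem isSolutionOn_of_norm_sub_sub_smul_le
    (h : ∀ η > 0, ∃ ρ > 0, ∀ s ∈ I, ∀ t ∈ I, |t - s| ≤ ρ →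
      ‖φ t - φ s - (t - s) • f (φ s)‖ ≤ η * |t - s|) :
    IsSolutionOn f I φ := by
  intro s hs
  rw [hasDerivWithinAt_iff_isLittleO, Asymptotics.isLittleO_iff]
  intro η hη
  obtain ⟨ρ, hρ, hρη⟩ := h η hη
  filter_upwards [inter_mem_nhdsWithin I (Metric.closedBall_mem_nhds s hρ)] with t ht
  exact hρη s hs t ht.1 ht.2

theorem IsSolutionOn.of_tendsto [ProperSpace E] (hf : Continuous f) (hI : Convex ℝ I)
    {F : Filter ι} [F.NeBot] {g : ι → ℝ → E}
    (hg : ∀ᶠ k in F, IsSolutionOn f I (g k) ∧ ∀ u ∈ I, ‖g k u‖ ≤ R)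
    (hψ : ∀ u ∈ I, Tendsto (fun k => g k u) F (𝓝 (ψ u))) :
    IsSolutionOn f I ψ := by
  obtain ⟨C, hC, hfC⟩ := hf.exists_pos_norm_le_of_norm_le R
  have huc := Metric.uniformContinuousOn_iff_le.1 <|
    (isCompact_closedBall (0 : E) R).uniformContinuousOn_of_continuous hf.continuousOn
  refine isSolutionOn_of_norm_sub_sub_smul_le fun η hη => ?_
  obtain ⟨δ, hδ, hfδ⟩ := huc η hη
  refine ⟨δ / C, div_pos hδ hC, fun s hs t ht hst => ?_⟩
  have hgk : ∀ᶠ k in F, ‖g k t - g k s - (t - s) • f (g k s)‖ ≤ η * |t - s| :=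
    hg.mono fun k ⟨hk, hbd⟩ => hk.norm_sub_sub_smul_le hI (fun u hu => hfC _ (hbd u hu))
      (fun u hu v hv huv => by
        rw [← dist_eq_norm]
        refine hfδ _ (mem_closedBall_zero_iff.2 (hbd u hu)) _
          (mem_closedBall_zero_iff.2 (hbd v hv)) ?_
        rwa [mul_div_cancel₀ _ hC.ne', ← dist_eq_norm] at huv) hs ht hst
  refine le_of_tendsto ?_ hgk
  exact (((hψ t ht).sub (hψ s hs)).sub
    (((hf.tendsto _).comp (hψ s hs)).const_smul (t - s))).norm

end General

section Euclidean

variable {d : ℕ} {f : EuclideanSpace ℝ (Fin d) → EuclideanSpace ℝ (Fin d)} {T : EReal}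
  {φ ψ : ℝ → EuclideanSpace ℝ (Fin d)}

theorem convex_Ico_coe (T : EReal) : Convex ℝ {s : ℝ | 0 ≤ s ∧ (s : EReal) < T} :=
  OrdConnected.convex
    ⟨fun _ hx _ hy _ hz => ⟨hx.1.trans hz.1, (EReal.coe_le_coe_iff.2 hz.2).trans_lt hy.2⟩⟩

theorem isSolution_iff :
    IsSolution f T φ ↔ 0 < T ∧ IsSolutionOn f {s | 0 ≤ s ∧ (s : EReal) < T} φ :=
  and_congr_right' ⟨fun h t ht => h t ht.1 ht.2, fun h t ht htT => h t ⟨ht, htT⟩⟩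

theorem IsSolution.continuousOn (h : IsSolution f T φ) :
    ContinuousOn φ {s | 0 ≤ s ∧ (s : EReal) < T} :=
  fun t ht => (h.2 t ht.1 ht.2).continuousWithinAt

theorem IsSolution.infDist_le_infDist_add (h : IsSolution f T φ) {C : ℝ}
    (hC : ∀ u : ℝ, 0 ≤ u → (u : EReal) < T → ‖f (φ u)‖ ≤ C) (A : Set (EuclideanSpace ℝ (Fin d)))
    {s t : ℝ} (hs : 0 ≤ s) (hst : s ≤ t) (ht : (t : EReal) < T) :
    infDist (φ t) A ≤ infDist (φ s) A + C * (t - s) := by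
  have hlip := (isSolution_iff.1 h).2.norm_sub_le (convex_Ico_coe T) (fun u hu => hC u hu.1 hu.2)
    ⟨hs, (EReal.coe_le_coe_iff.2 hst).trans_lt ht⟩ ⟨hs.trans hst, ht⟩
  rw [abs_of_nonneg (sub_nonneg.2 hst), ← dist_eq_norm] at hlip
  linarith [infDist_le_infDist_add_dist (x := φ t) (y := φ s) (s := A)]

theorem IsSolution.mono {S : EReal} (h : IsSolution f T φ) (hS : 0 < S) (hST : S ≤ T) :
    IsSolution f S φ :=
  ⟨hS, fun t ht htS => (h.2 t ht (htS.trans_le hST)).mono fun _ hu => ⟨hu.1, hu.2.trans_le hST⟩⟩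

theorem EReal.coe_lt_sub_coe_iff {u s : ℝ} : (u : EReal) < T - s ↔ ((u + s : ℝ) : EReal) < T := by
  rw [EReal.lt_sub_iff_add_lt (.inl (EReal.coe_ne_bot s)) (.inl (EReal.coe_ne_top s)),
    EReal.coe_add]

theorem IsSolution.comp_add_const (h : IsSolution f T φ) {s : ℝ} (hs : 0 ≤ s)
    (hsT : (s : EReal) < T) : IsSolution f (T - s) (fun u => φ (u + s)) := by
  have hmaps : MapsTo (· + s) {v : ℝ | 0 ≤ v ∧ (v : EReal) < T - s}
      {v | 0 ≤ v ∧ (v : EReal) < T} :=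
    fun v hv => ⟨add_nonneg hv.1 hs, EReal.coe_lt_sub_coe_iff.1 hv.2⟩
  refine ⟨by rw [← EReal.coe_zero]; exact EReal.coe_lt_sub_coe_iff.2 (by rwa [zero_add]),
    fun u hu huS => ?_⟩
  have := (h.2 (u + s) (hmaps ⟨hu, huS⟩).1 (hmaps ⟨hu, huS⟩).2).scomp u
    ((hasDerivAt_id u).add_const s).hasDerivWithinAt hmaps
  rwa [one_smul] at this

theorem exists_isSolution_tendsto (hf : Continuous f) {ι : Type*} (U : Ultrafilter ι)
    {g : ι → ℝ → EuclideanSpace ℝ (Fin d)} {S : ι → EReal} {R : ℝ} (hT : 0 < T)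
    (hS : Tendsto S U (𝓝 T))
    (hg : ∀ᶠ k in U, IsSolution f (S k) (g k) ∧ ∀ u : ℝ, 0 ≤ u → (u : EReal) < S k → ‖g k u‖ ≤ R) :
    ∃ ψ, IsSolution f T ψ ∧
      ∀ u : ℝ, 0 ≤ u → (u : EReal) < T → Tendsto (fun k => g k u) U (𝓝 (ψ u)) := by
  have hlt : ∀ {L : EReal}, L < T → ∀ᶠ k in U, L < S k := fun hL => hS.eventually (lt_mem_nhds hL)
  obtain ⟨ψ, hψ⟩ := U.exists_forall_tendsto_of_norm_le
    (S := {u : ℝ | 0 ≤ u ∧ (u : EReal) < T}) (R := R)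
    fun u hu => ((hlt hu.2).and hg).mono fun k hk => hk.2.2 u hu.1 hk.1
  refine ⟨ψ, isSolution_iff.2 ⟨hT, fun t ht => ?_⟩, fun u hu huT => hψ u ⟨hu, huT⟩⟩
  obtain ⟨L, htL, hLT⟩ := EReal.lt_iff_exists_real_btwn.1 ht.2
  have hsub : ∀ {S' : EReal}, (L : EReal) ≤ S' →
      {u : ℝ | 0 ≤ u ∧ (u : EReal) < L} ⊆ {u | 0 ≤ u ∧ (u : EReal) < S'} :=
    fun h u hu => ⟨hu.1, hu.2.trans_le h⟩
  have hψL : IsSolutionOn f {u : ℝ | 0 ≤ u ∧ (u : EReal) < L} ψ :=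
    IsSolutionOn.of_tendsto hf (convex_Ico_coe L)
      (((hlt hLT).and hg).mono fun k ⟨hk, hsol, hbd⟩ =>
        ⟨(isSolution_iff.1 hsol).2.mono (hsub hk.le), fun u hu => hbd u hu.1 (hu.2.trans hk)⟩)
      fun u hu => hψ u (hsub hLT.le hu)
  refine (hψL t ⟨ht.1, htL⟩).mono_of_mem_nhdsWithin (mem_of_superset
    (inter_mem_nhdsWithin _ (Iio_mem_nhds (EReal.coe_lt_coe_iff.1 htL))) fun u hu => ?_)
  exact ⟨hu.1.1, EReal.coe_lt_coe_iff.2 hu.2⟩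

theorem IsSolution.exists_isSolution_top_of_tendsto_infDist (hf : Continuous f)
    (hψ : IsSolution f ⊤ ψ) {R : ℝ} (hbd : ∀ u, 0 ≤ u → ‖ψ u‖ ≤ R)
    {A : Set (EuclideanSpace ℝ (Fin d))} (hA : IsClosed A) (hne : A.Nonempty)
    (hlim : Tendsto (fun t => infDist (ψ t) A) atTop (𝓝 0)) :
    ∃ χ, IsSolution f ⊤ χ ∧ χ 0 ∈ A ∧ ∀ u, 0 ≤ u → χ u ∈ closure (ψ '' Ici 0) := by
  set U := Ultrafilter.of (atTop : Filter ℝ)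
  have hU : (U : Filter ℝ) ≤ atTop := Ultrafilter.of_le _
  have hpos : ∀ᶠ s : ℝ in U, 0 ≤ s := hU (eventually_ge_atTop 0)
  obtain ⟨χ, hχ, hχlim⟩ := exists_isSolution_tendsto hf U (g := fun s u => ψ (u + s))
    (S := fun _ => ⊤) (R := R) EReal.zero_lt_top tendsto_const_nhds
    (hpos.mono fun s hs => ⟨by simpa using hψ.comp_add_const hs (EReal.coe_lt_top s),
      fun u hu _ => hbd _ (add_nonneg hu hs)⟩)
  refine ⟨χ, hχ, mem_of_tendsto_infDist hA hne (x := ψ) ?_ (hlim.mono_left hU), fun u hu =>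
    mem_closure_of_tendsto (hχlim u hu (EReal.coe_lt_top u))
      (hpos.mono fun s hs => ⟨u + s, add_nonneg hu hs, rfl⟩)⟩
  simpa using hχlim 0 le_rfl (EReal.coe_lt_top 0)

end Euclidean

section Hierarchy

variable {d : ℕ} {f : EuclideanSpace ℝ (Fin d) → EuclideanSpace ℝ (Fin d)}
  {Me Mi Mo : Set (EuclideanSpace ℝ (Fin d))}

def UniformlyGloballyBoundedRelCT (f : EuclideanSpace ℝ (Fin d) → EuclideanSpace ℝ (Fin d))
    (Y : Set (EuclideanSpace ℝ (Fin d))) : Prop :=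
  ∀ K : Set (EuclideanSpace ℝ (Fin d)), IsCompact K → K ⊆ Y →
    ∃ Δ > (0 : ℝ), ∀ (T : EReal) (φ : ℝ → EuclideanSpace ℝ (Fin d)),
      IsSolution f T φ → φ 0 ∈ K → ∀ t : ℝ, 0 ≤ t → (t : EReal) < T → ‖φ t‖ < Δ

theorem exists_uniform_hittingTime (hf : Continuous f) (hMiClosed : IsClosed Mi)
    (hMoSub : Mo ⊆ Mi) (hMiAttr : GloballyAttractiveRelCT f Me Mi)
    (hMoAttr : GloballyAttractiveRelCT f Mi Mo) (hUGB : UniformlyGloballyBoundedRelCT f Me)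
    {K : Set (EuclideanSpace ℝ (Fin d))} (hK : IsCompact K) (hKMe : K ⊆ Me) {δ : ℝ} (hδ : 0 < δ) :
    ∃ Θ > (0 : ℝ), ∀ (T : EReal) (φ : ℝ → EuclideanSpace ℝ (Fin d)), IsSolution f T φ →
      φ 0 ∈ K → (Θ : EReal) < T → ∃ t ∈ Icc 0 Θ, infDist (φ t) Mo < δ := by
  obtain ⟨R, -, hbd⟩ := hUGB K hK hKMe
  by_contra! h
  choose T φ hφ hφK hT hfar using fun k : ℕ => h (k + 1) (by positivity)
  set U := Ultrafilter.of (atTop : Filter ℕ)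
  have hU : (U : Filter ℕ) ≤ atTop := Ultrafilter.of_le _
  have hlong : ∀ u : ℝ, ∀ᶠ k : ℕ in U, u ≤ k := fun u =>
    hU (tendsto_natCast_atTop_atTop.eventually_ge_atTop u)
  have hlongT : ∀ u : ℝ, ∀ᶠ k in U, (u : EReal) < T k := fun u =>
    (hlong u).mono fun k hk => (EReal.coe_lt_coe_iff.2 (by linarith)).trans (hT k)
  have hTtop : Tendsto T U (𝓝 ⊤) := EReal.tendsto_nhds_top_iff_real.2 hlongT
  obtain ⟨ψ, hψ, hψlim⟩ := exists_isSolution_tendsto hf U EReal.zero_lt_top hTtop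
    (Eventually.of_forall fun k => ⟨hφ k, fun u hu huT => (hbd _ _ (hφ k) (hφK k) u hu huT).le⟩)
  have hψK : ψ 0 ∈ K :=
    hK.isClosed.mem_of_tendsto (hψlim 0 le_rfl (EReal.coe_lt_top 0)) (Eventually.of_forall hφK)
  have hψfar : ∀ u : ℝ, 0 ≤ u → δ ≤ infDist (ψ u) Mo := fun u hu =>
    ge_of_tendsto (((continuous_infDist_pt Mo).tendsto _).comp (hψlim u hu (EReal.coe_lt_top u)))
      ((hlong u).mono fun k hk => hfar k u ⟨hu, by linarith⟩)
  have hψbd : ∀ u : ℝ, 0 ≤ u → ‖ψ u‖ ≤ R := fun u hu =>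
    le_of_tendsto (hψlim u hu (EReal.coe_lt_top u)).norm
      ((hlongT u).mono fun k hk => (hbd _ _ (hφ k) (hφK k) u hu hk).le)
  obtain ⟨χ, hχ, hχMi, hχω⟩ := hψ.exists_isSolution_top_of_tendsto_infDist hf hψbd hMiClosed
    ((nonempty_of_infDist_pos (hδ.trans_le (hψfar 0 le_rfl))).mono hMoSub) (hMiAttr ψ hψ (hKMe hψK))
  have hχfar : ∀ u : ℝ, 0 ≤ u → δ ≤ infDist (χ u) Mo := fun u hu =>
    closure_minimal (t := {x | δ ≤ infDist x Mo}) (image_subset_iff.2 fun v hv => hψfar v hv)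
      (isClosed_le continuous_const (continuous_infDist_pt Mo)) (hχω u hu)
  obtain ⟨u, hu, hu'⟩ := ((eventually_ge_atTop 0).and
    ((hMoAttr χ hχ hχMi).eventually_lt_const hδ)).exists
  exact (hχfar u hu).not_gt hu'

theorem StableRelCT.exists_finiteTime_robust (hf : Continuous f) (hMiClosed : IsClosed Mi)
    (hMoSub : Mo ⊆ Mi) (hMoStable : StableRelCT f Mi Mo) {ε R : ℝ} (hε : 0 < ε) (hR : 0 < R) :
    ∃ δ > 0, ∀ Θ : ℝ, ∃ ρ > 0, ∀ (T : EReal) (φ : ℝ → EuclideanSpace ℝ (Fin d)),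
      IsSolution f T φ → (∀ u : ℝ, 0 ≤ u → (u : EReal) < T → ‖φ u‖ ≤ R) →
      infDist (φ 0) Mi < ρ → infDist (φ 0) Mo ≤ δ →
        ∀ t ∈ Icc 0 Θ, (t : EReal) < T → infDist (φ t) Mo < ε := by
  obtain ⟨C, hC, hfC⟩ := hf.exists_pos_norm_le_of_norm_le R
  obtain ⟨δ₂, hδ₂, hstab⟩ := hMoStable (ε / 2) (half_pos hε) (R + 1) (by linarith)
  obtain ⟨δ, hδ, hδm⟩ := exists_between (lt_min hδ₂ hε)
  obtain ⟨hδδ₂, hδε⟩ := lt_min_iff.1 hδm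
  refine ⟨δ, hδ, fun Θ => ?_⟩
  by_contra! h
  choose T φ hφ hbd hMi hMo t ht htT hfar using
    fun k : ℕ => h (1 / (k + 1)) Nat.one_div_pos_of_nat
  have hlip : ∀ k, ∀ u, 0 ≤ u → u ≤ t k → ε - C * (t k - u) ≤ infDist (φ k u) Mo :=
    fun k u hu hut => by
      linarith [hfar k, (hφ k).infDist_le_infDist_add (fun v hv hvT => hfC _ (hbd k v hv hvT)) Mo
        hu hut (htT k)]
  have hc : 0 < (ε - δ) / C := div_pos (by linarith) hC
  have hdur : ∀ k, (ε - δ) / C ≤ t k := fun k => by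
    rw [div_le_iff₀ hC]
    linarith [hlip k 0 le_rfl (ht k).1, hMo k]
  have ht0 : ∀ k, (0 : EReal) < t k := fun k => EReal.coe_pos.2 (hc.trans_le (hdur k))
  set U := Ultrafilter.of (atTop : Filter ℕ)
  obtain ⟨r, hr, hrlim⟩ := U.exists_tendsto_of_eventually_mem isCompact_Icc
    (Eventually.of_forall fun k => ⟨hdur k, (ht k).2⟩)
  have hr0 : 0 < r := hc.trans_le hr.1
  obtain ⟨ψ, hψ, hψlim⟩ := exists_isSolution_tendsto hf U (S := fun k => (t k : EReal)) (R := R)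
    (EReal.coe_pos.2 hr0) (EReal.tendsto_coe.2 hrlim) <| Eventually.of_forall fun k =>
      ⟨(hφ k).mono (ht0 k) (htT k).le, fun u hu hut => hbd k u hu (hut.trans (htT k))⟩
  have hψ0 := hψlim 0 le_rfl (EReal.coe_pos.2 hr0)
  have hψMi : ψ 0 ∈ Mi := mem_of_tendsto_infDist hMiClosed
    ((nonempty_of_infDist_pos (hε.trans_le (hfar 0))).mono hMoSub) hψ0 <|
    (squeeze_zero (fun _ => infDist_nonneg) (fun k => (hMi k).le)
      tendsto_one_div_add_atTop_nhds_zero_nat).mono_left (Ultrafilter.of_le _)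
  have hψ0Mo : infDist (ψ 0) Mo < δ₂ := (le_of_tendsto
    (((continuous_infDist_pt Mo).tendsto _).comp hψ0) (Eventually.of_forall hMo)).trans_lt hδδ₂
  have hψ0R : ‖ψ 0‖ < R + 1 := (le_of_tendsto hψ0.norm (Eventually.of_forall fun k =>
    hbd k 0 le_rfl ((ht0 k).trans (htT k)))).trans_lt (by linarith)
  -- stability keeps `ψ` within `ε / 2` of `Mo`, whereas the `φ k` reach `ε` at times `t k → r`
  have hescape : ∀ u, 0 ≤ u → u < r → ε - C * (r - u) < ε / 2 := fun u hu hur =>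
    (le_of_tendsto_of_tendsto ((hrlim.sub_const u).const_mul C |>.const_sub ε)
      (((continuous_infDist_pt Mo).tendsto _).comp (hψlim u hu (EReal.coe_lt_coe_iff.2 hur)))
      ((hrlim.eventually (lt_mem_nhds hur)).mono fun k hk => hlip k u hu hk.le)).trans_lt
    (hstab r ψ hψ hψMi hψ0Mo hψ0R u hu (EReal.coe_lt_coe_iff.2 hur))
  have hlim : Tendsto (fun u => ε - C * (r - u)) (𝓝[<] r) (𝓝 ε) := by
    simpa using ((by fun_prop : Continuous fun u : ℝ => ε - C * (r - u)).tendsto r).mono_left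
      nhdsWithin_le_nhds
  refine (le_of_tendsto hlim ?_).not_gt (half_lt_self hε)
  filter_upwards [Ioo_mem_nhdsLT hr0] with u hu using (hescape u hu.1.le hu.2).le

theorem stableRelCT_of_hierarchy (hf : Continuous f) (hMeClosed : IsClosed Me)
    (hMeInv : FwdInvariant f Me) (hMiClosed : IsClosed Mi) (hMiStable : StableRelCT f Me Mi)
    (hMiAttr : GloballyAttractiveRelCT f Me Mi) (hMoSub : Mo ⊆ Mi)
    (hMoStable : StableRelCT f Mi Mo) (hMoAttr : GloballyAttractiveRelCT f Mi Mo)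
    (hUGB : UniformlyGloballyBoundedRelCT f Me) : StableRelCT f Me Mo := by
  intro ε hε Δ hΔ
  rcases Mo.eq_empty_or_nonempty with rfl | hMoNe
  · exact ⟨1, one_pos, fun _ _ _ _ _ _ _ _ _ => by simpa using hε⟩
  have hK : ∀ r, IsCompact (closedBall 0 r ∩ Me) := fun r =>
    (isCompact_closedBall 0 r).inter_right hMeClosed
  obtain ⟨R, hR, hbd⟩ := hUGB _ (hK Δ) inter_subset_right
  obtain ⟨δ, hδ, hP⟩ := hMoStable.exists_finiteTime_robust hf hMiClosed hMoSub hε hR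
  obtain ⟨Θ, hΘ, hH⟩ := exists_uniform_hittingTime hf hMiClosed hMoSub hMiAttr hMoAttr hUGB
    (hK R) inter_subset_right hδ
  obtain ⟨ρ, hρ, hPρ⟩ := hP (Θ + 1)
  obtain ⟨δ', hδ', hMi⟩ := hMiStable ρ hρ Δ hΔ
  refine ⟨min δ δ', lt_min hδ hδ', fun T φ hφ hφMe hφMo hφΔ t ht htT => ?_⟩
  have hbdφ := hbd T φ hφ ⟨mem_closedBall_zero_iff.2 hφΔ.le, hφMe⟩
  by_contra! hεt
  obtain ⟨s, ⟨hs, hst⟩, hsδ, hout⟩ := ContinuousOn.exists_last_le ht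
    (((continuous_infDist_pt Mo).comp_continuousOn hφ.continuousOn).mono fun u hu =>
      ⟨hu.1, (EReal.coe_le_coe_iff.2 hu.2).trans_lt htT⟩) (hφMo.le.trans (min_le_left _ _))
  have hsT : (s : EReal) < T := (EReal.coe_le_coe_iff.2 hst).trans_lt htT
  rcases le_or_gt (t - s) (Θ + 1) with hts | hts
  · have hsMi : infDist (φ s) Mi < ρ := hMi T φ hφ hφMe
      ((infDist_le_infDist_of_subset hMoSub hMoNe).trans_lt (hφMo.trans_le (min_le_right _ _)))
      hφΔ s hs hsT
    have := hPρ (T - s) _ (hφ.comp_add_const hs hsT)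
      (fun u hu huT => (hbdφ _ (add_nonneg hu hs) (EReal.coe_lt_sub_coe_iff.1 huT)).le)
      (by simpa using hsMi) (by simpa using hsδ) (t - s) ⟨by linarith, hts⟩
      (EReal.coe_lt_sub_coe_iff.2 (by simpa using htT))
    simp only [sub_add_cancel] at this
    linarith
  · have hs1 : ((s + 1 : ℝ) : EReal) < T := (EReal.coe_lt_coe_iff.2 (by linarith)).trans htT
    obtain ⟨t', ⟨ht'0, ht'Θ⟩, ht'δ⟩ := hH (T - ↑(s + 1)) _ (hφ.comp_add_const (by linarith) hs1)
      (by simpa using ⟨(hbdφ _ (by linarith) hs1).le, hMeInv T φ hφ hφMe _ (by linarith) hs1⟩)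
      (EReal.coe_lt_sub_coe_iff.2 ((EReal.coe_lt_coe_iff.2 (by linarith)).trans htT))
    exact lt_asymm ht'δ (hout _ ⟨by linarith, by linarith⟩)

end Hierarchy

theorem hierarchical_UGAS_ct_general {d : ℕ}
    (f : EuclideanSpace ℝ (Fin d) → EuclideanSpace ℝ (Fin d)) (hf : Continuous f)
    (Me Mi Mo : Set (EuclideanSpace ℝ (Fin d)))
    (hMeClosed : IsClosed Me) (hMeInv : FwdInvariant f Me)
    (hMiClosed : IsClosed Mi)
    (hMiStable : StableRelCT f Me Mi) (hMiAttr : GloballyAttractiveRelCT f Me Mi)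
    (hMoSub : Mo ⊆ Mi)
    (hMoStable : StableRelCT f Mi Mo) (hMoAttr : GloballyAttractiveRelCT f Mi Mo)
    (hUGB : ∀ K : Set (EuclideanSpace ℝ (Fin d)), IsCompact K → K ⊆ Me →
      ∃ Δ > (0 : ℝ), ∀ (T : EReal) (φ : ℝ → EuclideanSpace ℝ (Fin d)),
        IsSolution f T φ → φ 0 ∈ K → ∀ t : ℝ, 0 ≤ t → (t : EReal) < T → ‖φ t‖ < Δ) :
    StableRelCT f Me Mo ∧
      ∀ K : Set (EuclideanSpace ℝ (Fin d)), IsCompact K → K ⊆ Me →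
        ∀ ε > (0 : ℝ), ∃ T' > (0 : ℝ), ∀ φ : ℝ → EuclideanSpace ℝ (Fin d),
          IsSolution f ⊤ φ → φ 0 ∈ K → ∀ t ≥ T', infDist (φ t) Mo ≤ ε := by
  have hStable := stableRelCT_of_hierarchy hf hMeClosed hMeInv hMiClosed hMiStable hMiAttr hMoSub
    hMoStable hMoAttr hUGB
  refine ⟨hStable, fun K hK hKMe ε hε => ?_⟩
  obtain ⟨R, hR, hbd⟩ := hUGB K hK hKMe
  obtain ⟨δ, hδ, hstab⟩ := hStable ε hε R hR
  obtain ⟨Θ, hΘ, hH⟩ :=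
    exists_uniform_hittingTime hf hMiClosed hMoSub hMiAttr hMoAttr hUGB hK hKMe hδ
  refine ⟨Θ, hΘ, fun φ hφ hφK t ht => ?_⟩
  obtain ⟨t₀, ⟨ht₀, ht₀Θ⟩, ht₀δ⟩ := hH ⊤ φ hφ hφK (EReal.coe_lt_top Θ)
  have := hstab ⊤ _ (hφ.comp_add_const ht₀ (EReal.coe_lt_top t₀))
    (by simpa using hMeInv ⊤ φ hφ (hKMe hφK) t₀ ht₀ (EReal.coe_lt_top t₀)) (by simpa using ht₀δ)
    (by simpa using hbd ⊤ φ hφ hφK t₀ ht₀ (EReal.coe_lt_top t₀)) (t - t₀) (by linarith)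
    (EReal.coe_lt_top _)
  simpa using this.le

theorem hierarchical_UGAS_ct {d : ℕ}
    (f : EuclideanSpace ℝ (Fin d) → EuclideanSpace ℝ (Fin d)) (hf : Continuous f)
    (Me Mi Mo : Set (EuclideanSpace ℝ (Fin d)))
    (hMeClosed : IsClosed Me) (hMeInv : FwdInvariant f Me)
    (hMiSub : Mi ⊆ Me) (hMiClosed : IsClosed Mi)
    (hMiStable : StableRelCT f Me Mi) (hMiAttr : GloballyAttractiveRelCT f Me Mi)
    (hMoSub : Mo ⊆ Mi) (hMoCompact : IsCompact Mo)
    (hMoStable : StableRelCT f Mi Mo) (hMoAttr : GloballyAttractiveRelCT f Mi Mo)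
    (hUGB : ∀ K : Set (EuclideanSpace ℝ (Fin d)), IsCompact K → K ⊆ Me →
      ∃ Δ > (0 : ℝ), ∀ (T : EReal) (φ : ℝ → EuclideanSpace ℝ (Fin d)),
        IsSolution f T φ → φ 0 ∈ K → ∀ t : ℝ, 0 ≤ t → (t : EReal) < T → ‖φ t‖ < Δ) :
    StableRelCT f Me Mo ∧
      ∀ K : Set (EuclideanSpace ℝ (Fin d)), IsCompact K → K ⊆ Me →
        ∀ ε > (0 : ℝ), ∃ T' > (0 : ℝ), ∀ φ : ℝ → EuclideanSpace ℝ (Fin d),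
          IsSolution f ⊤ φ → φ 0 ∈ K → ∀ t ≥ T', infDist (φ t) Mo ≤ ε :=
  hierarchical_UGAS_ct_general f hf Me Mi Mo hMeClosed hMeInv hMiClosed hMiStable hMiAttr hMoSub
    hMoStable hMoAttr hUGB
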